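/- arXiv:1810.05230 — 4 statements merged into one kernel-verified Lean document; each statement's English description precedes it below -/
import Mathlib

section
/- Let J be as given. If ν ∈ E^* is a prefix of some μ ∈ J_1, then the subfamily {μ' ∈ J_1 : ν ≼ μ'} is a partition of ν, i.e. the cylinder sets Z(μ') with μ' ∈ J_1 and ν ≼ μ' are pairwise disjoint and their union is Z(ν). The same conclusion holds with J_2 in place of J_1. -/
/-- A finite directed multigraph. -/
structure FinGraph where
  V : Type
  E : Type
  fintV : Fintype V
  fintE : Fintype E
  src : E → V
  rng : E → V

variable {G : FinGraph}

/-- A finite path in the graph `G`: a source vertex together with a compatible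
list of edges (a vertex is a path of length 0). -/
structure FPath (G : FinGraph) where
  source : G.V
  edges : List G.E
  head_src : ∀ e ∈ edges.head?, G.src e = source
  chain : edges.Chain' fun e f => G.rng e = G.src f

/-- The range (terminal vertex) of a finite path. -/
def FPath.range (p : FPath G) : G.V :=
  p.edges.getLast?.elim p.source G.rng

/-- The length-0 path at a vertex. -/
def FPath.nil (G : FinGraph) (v : G.V) : FPath G :=
  ⟨v, [], by simp, List.isChain_nil⟩

/-- `p.Prefix q` : the path `p` is an initial segment of the path `q`. -/
def FPath.Prefix (p q : FPath G) : Prop :=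
  p.source = q.source ∧ p.edges <+: q.edges

/-- The path obtained by removing the first edge (the tail `κ` of `ν = eκ`). -/
def FPath.tail (p : FPath G) : FPath G where
  source := p.edges.head?.elim p.source G.rng
  edges := p.edges.tail
  head_src := by
    cases hp : p.edges with
    | nil => simp
    | cons a l =>
      have h := p.chain
      rw [hp, List.Chain', List.isChain_cons] at h
      intro e he
      simp only [hp, List.head?_cons, Option.elim, List.tail_cons] at he ⊢
      exact (h.1 e he).symm
  chain := p.chain.tail

/-- An infinite path in the graph `G`. -/
structure IPath (G : FinGraph) where
  edges : ℕ → G.E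
  chain : ∀ i, G.rng (edges i) = G.src (edges (i + 1))

/-- The source vertex of an infinite path. -/
def IPath.source (p : IPath G) : G.V := G.src (p.edges 0)

/-- The cylinder set `Z(p)` of a finite path `p`: all infinite paths with prefix `p`. -/
def cylinder (p : FPath G) : Set (IPath G) :=
  {q | q.source = p.source ∧ ∀ i, (h : i < p.edges.length) → q.edges i = p.edges.get ⟨i, h⟩}

/-- A finite collection `S` of finite paths is a partition of the path `ν`:
the cylinder sets are pairwise disjoint with union `Z(ν)`. -/
def IsPartitionOfPath (S : Set (FPath G)) (ν : FPath G) : Prop :=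
  S.Finite ∧ (∀ p ∈ S, ∀ q ∈ S, p ≠ q → cylinder p ∩ cylinder q = ∅) ∧
    (⋃ p ∈ S, cylinder p) = cylinder ν

/-- A finite collection `S` of finite paths is a partition of the vertex `v`. -/
def IsPartitionOf (S : Set (FPath G)) (v : G.V) : Prop :=
  IsPartitionOfPath S (FPath.nil G v)

/-- Standing assumptions: no sinks, no sources, every cycle has an exit. -/
structure Standing (G : FinGraph) : Prop where
  no_sinks : ∀ v : G.V, ∃ e, G.src e = v
  no_sources : ∀ v : G.V, ∃ e, G.rng e = v
  cycles_exit : ∀ p : FPath G, p.edges ≠ [] → p.range = p.source →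
    ∃ e ∈ p.edges, ∃ f, f ≠ e ∧ G.src f = G.src e

/-- The combinatorial conditions making `u_J = Σ_{(μ,ν) ∈ J} S_μ S_ν^*` a unitary:
`J` is finite, `s(μ) = s(ν)`, `r(μ) = r(ν)`, `|ν| ≥ 1` for all `(μ,ν) ∈ J`, and both
families of cylinder sets are pairwise disjoint with union all of `E^∞`. -/
structure IsUnitaryJ (G : FinGraph) (J : Set (FPath G × FPath G)) : Prop where
  finite : J.Finite
  src_eq : ∀ p ∈ J, (Prod.fst p).source = (Prod.snd p).source
  rng_eq : ∀ p ∈ J, FPath.range (Prod.fst p) = FPath.range (Prod.snd p)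
  ne_nil : ∀ p ∈ J, (Prod.snd p).edges ≠ []
  disj₁ : ∀ p ∈ J, ∀ q ∈ J, p ≠ q → cylinder (Prod.fst p) ∩ cylinder (Prod.fst q) = ∅
  union₁ : (⋃ p ∈ J, cylinder (Prod.fst p)) = Set.univ
  disj₂ : ∀ p ∈ J, ∀ q ∈ J, p ≠ q → cylinder (Prod.snd p) ∩ cylinder (Prod.snd q) = ∅
  union₂ : (⋃ p ∈ J, cylinder (Prod.snd p)) = Set.univ

/-- Adjacency in the coding graph `E_J`: there is an edge from `p = (μ₁, e₁ν₁)` to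
`q = (μ₂, e₂ν₂)` iff the tail `ν₁` and `μ₂` are prefix-comparable
(the combinatorial content of `S_{ν₁}^* S_{μ₂} ≠ 0`). -/
def CGAdj (p q : FPath G × FPath G) : Prop :=
  FPath.Prefix p.2.tail q.1 ∨ FPath.Prefix q.1 p.2.tail

/-- The degree `|μ₂| − |ν₁|` of the coding-graph edge from `p` to `q`. -/
def cgDeg (p q : FPath G × FPath G) : ℤ :=
  (q.1.edges.length : ℤ) - (p.2.tail.edges.length : ℤ)

/-- `IsAppend p q r` : the path `r` is the concatenation `p q`. -/
def IsAppend (p q r : FPath G) : Prop :=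
  r.source = p.source ∧ q.source = p.range ∧ r.edges = p.edges ++ q.edges

/-- A finite path in the coding graph `E_J`, recorded by the (nonempty) list of
vertices of `J` it visits (a single vertex is a path of length 0). -/
structure CGPath (G : FinGraph) (J : Set (FPath G × FPath G)) where
  verts : List (FPath G × FPath G)
  ne : verts ≠ []
  mem : ∀ v ∈ verts, v ∈ J
  adj : verts.Chain' CGAdj

/-- The `E`-label of a path in the coding graph: the list of distinguished first
edges `e` of the second coordinates of the vertices it visits. -/
def CGPath.elabel {J : Set (FPath G × FPath G)} (ω : CGPath G J) : List G.E :=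
  ω.verts.filterMap fun v => v.2.edges.head?

/-- `IsLabelOf l γ` : `γ` is the `L_J`-label of the coding-graph path visiting the
vertices in the list `l` (all of whose edges are non-negative): the concatenation of
the `L_J`-labels of its edges, and the empty path at `r(μ)` for the length-0 path
at a vertex `(μ, eν)`. -/
inductive IsLabelOf : List (FPath G × FPath G) → FPath G → Prop
  | single (p : FPath G × FPath G) (γ : FPath G) :
      γ.edges = [] → γ.source = FPath.range p.1 → IsLabelOf [p] γ
  | cons (p q : FPath G × FPath G) (rest : List (FPath G × FPath G)) (α γ δ : FPath G) :
      IsAppend p.2.tail α q.1 → IsLabelOf (q :: rest) γ → IsAppend α γ δ →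
      IsLabelOf (p :: q :: rest) δ

/-- Every edge of the coding graph `E_J` is non-negative. -/
def AllEdgesNonneg (G : FinGraph) (J : Set (FPath G × FPath G)) : Prop :=
  ∀ p ∈ J, ∀ q ∈ J, CGAdj p q → 0 ≤ cgDeg p q

/-- The coding graph `E_J` contains a non-positive cycle. -/
def HasNonposCycle (G : FinGraph) (J : Set (FPath G × FPath G)) : Prop :=
  ∃ ω : CGPath G J, 2 ≤ ω.verts.length ∧ ω.verts.getLast ω.ne = ω.verts.head ω.ne ∧
    ω.verts.Chain' fun p q => cgDeg p q ≤ 0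

/-- All outgoing edges of the vertex `p` in the coding graph `E_J` are positive. -/
def AllOutPositive (G : FinGraph) (J : Set (FPath G × FPath G))
    (p : FPath G × FPath G) : Prop :=
  ∀ q ∈ J, CGAdj p q → 0 < cgDeg p q

/-- `IsSnoc p f q` : the path `q` is `p` extended by the single edge `f`. -/
def IsSnoc (p : FPath G) (f : G.E) (q : FPath G) : Prop :=
  q.source = p.source ∧ q.edges = p.edges ++ [f]

/-- `IsSplitting G J p J'` : `J'` is the splitting of `J` at the vertex `p = (μ, eν)`,
i.e. `J' = (J ∖ {(μ,eν)}) ∪ {(μf, eνf) : f ∈ E¹, s(f) = r(μ)}`. -/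
def IsSplitting (G : FinGraph) (J : Set (FPath G × FPath G)) (p : FPath G × FPath G)
    (J' : Set (FPath G × FPath G)) : Prop :=
  p ∈ J ∧ ∀ q, q ∈ J' ↔ (q ∈ J ∧ q ≠ p) ∨
    ∃ f, G.src f = FPath.range p.1 ∧ IsSnoc p.1 f q.1 ∧ IsSnoc p.2 f q.2

/-- The set of negative edges of the coding graph `E_J`. -/
def negEdgeSet (G : FinGraph) (J : Set (FPath G × FPath G)) :
    Set ((FPath G × FPath G) × (FPath G × FPath G)) :=
  {e | e.1 ∈ J ∧ e.2 ∈ J ∧ CGAdj e.1 e.2 ∧ cgDeg e.1 e.2 < 0}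

/-- `IsFinalNeg G J p q ω d` : the edge from `p` to `q` in `E_J` is a final negative
edge with destination `d`, via the zero path `ω` from `q` to `d`; the height of the
edge is `ω.verts.length - 1`. -/
def IsFinalNeg (G : FinGraph) (J : Set (FPath G × FPath G))
    (p q : FPath G × FPath G) (ω : CGPath G J) (d : FPath G × FPath G) : Prop :=
  p ∈ J ∧ q ∈ J ∧ CGAdj p q ∧ cgDeg p q < 0 ∧
    ω.verts.head ω.ne = q ∧ ω.verts.getLast ω.ne = d ∧
    (ω.verts.Chain' fun a b => cgDeg a b = 0) ∧ AllOutPositive G J d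

/-- `(E_J, E)` is left-synchronizing with delay `m` : any two paths of length `m`
(i.e. with `m+1` vertices) in `E_J` with the same `E`-label have the same source. -/
def LeftSyncDelay (G : FinGraph) (J : Set (FPath G × FPath G)) (m : ℕ) : Prop :=
  ∀ ω ξ : CGPath G J, ω.verts.length = m + 1 → ξ.verts.length = m + 1 →
    ω.elabel = ξ.elabel → ω.verts.head ω.ne = ξ.verts.head ξ.ne

/-- An infinite path in the coding graph `E_J`. -/
structure CGIPath (G : FinGraph) (J : Set (FPath G × FPath G)) where
  verts : ℕ → FPath G × FPath G
  mem : ∀ i, verts i ∈ J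
  adj : ∀ i, CGAdj (verts i) (verts (i + 1))

/-- The infinite `E`-label of an infinite coding-graph path is the infinite path `α`. -/
def ELabelInf {J : Set (FPath G × FPath G)} (ω : CGIPath G J) (α : IPath G) : Prop :=
  ∀ i, (ω.verts i).2.edges.head? = some (α.edges i)

/-- A transducer with input alphabet `A`, output alphabet `B`, a finite state set,
an initial state and a transition function. -/
structure Transducer (A B : Type) where
  S : Type
  finS : Finite S
  init : S
  tr : S → A → S × List B

/-- The state sequence of a transducer on an infinite input word. -/
def Transducer.states {A B : Type} (T : Transducer A B) (α : ℕ → A) : ℕ → T.S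
  | 0 => T.init
  | n + 1 => (T.tr (T.states α n) (α n)).1

/-- The `n`-th output block of a transducer on an infinite input word. -/
def Transducer.outBlock {A B : Type} (T : Transducer A B) (α : ℕ → A) (n : ℕ) : List B :=
  (T.tr (T.states α n) (α n)).2

/-- The concatenation of the first `n` blocks of a sequence of finite words. -/
def joinUpTo {X : Type} (f : ℕ → List X) (n : ℕ) : List X :=
  ((List.range n).map f).flatten

/-- Two infinite concatenations of sequences of finite words are equal. -/
def StreamsEq {X : Type} (f g : ℕ → List X) : Prop :=
  (∀ n, ∃ m, joinUpTo f n <+: joinUpTo g m) ∧ ∀ n, ∃ m, joinUpTo g n <+: joinUpTo f m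

/-- The type of edges of the coding graph `E_J`. -/
def CGEdgeT (G : FinGraph) (J : Set (FPath G × FPath G)) : Type :=
  {e : (FPath G × FPath G) × (FPath G × FPath G) // e.1 ∈ J ∧ e.2 ∈ J ∧ CGAdj e.1 e.2}

/-- The sequence of edges of an infinite coding-graph path. -/
def CGIPath.edgeSeq {J : Set (FPath G × FPath G)} (ω : CGIPath G J) (i : ℕ) : CGEdgeT G J :=
  ⟨(ω.verts i, ω.verts (i + 1)), ω.mem i, ω.mem (i + 1), ω.adj i⟩

/-!
Without sinks every cylinder set is nonempty, so the pairwise disjointness of the cylinders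
`Z(μ)`, `μ ∈ J₁`, makes `J₁` a prefix antichain. A point of `Z(ν)` lies in some `Z(μ')` with
`μ' ∈ J₁`; `μ'` and `ν` are then comparable, and `μ'` cannot be a proper prefix of `ν`, since it
would then be a proper prefix of `μ`. Hence `ν ≼ μ'`.
-/

def IPath.cons (e : G.E) (x : IPath G) (h : G.rng e = x.source) : IPath G where
  edges
    | 0 => e
    | i + 1 => x.edges i
  chain
    | 0 => h
    | i + 1 => x.chain i

theorem IPath.exists_source_eq (hsinks : ∀ v : G.V, ∃ e, G.src e = v) (v : G.V) :
    ∃ x : IPath G, x.source = v := by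
  choose next hnext using hsinks
  refine ⟨⟨fun n => next ((G.rng ∘ next)^[n] v), fun n => ?_⟩, hnext v⟩
  rw [hnext, Function.iterate_succ_apply']
  rfl

theorem cylinder_nonempty (hsinks : ∀ v : G.V, ∃ e, G.src e = v) (μ : FPath G) :
    (cylinder μ).Nonempty := by
  induction hn : μ.edges.length generalizing μ with
  | zero =>
    obtain ⟨x, hx⟩ := IPath.exists_source_eq hsinks μ.source
    exact ⟨x, hx, fun i hi => absurd hi (by omega)⟩
  | succ n ih =>
    obtain ⟨e, t, he⟩ := List.exists_cons_of_length_eq_add_one hn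
    obtain ⟨x, hxs, hxe⟩ := ih μ.tail (by simpa [FPath.tail, he] using hn)
    have hx : G.rng e = x.source := by simp [hxs, FPath.tail, he]
    refine ⟨x.cons e hx, μ.head_src e (by simp [he]), ?_⟩
    rintro (_ | i) hi
    · simp [IPath.cons, he]
    · simpa [IPath.cons, FPath.tail, he] using hxe i (by simp [FPath.tail, he] at hi ⊢; omega)

theorem FPath.Prefix.trans {p q r : FPath G} (hpq : p.Prefix q) (hqr : q.Prefix r) :
    p.Prefix r :=
  ⟨hpq.1.trans hqr.1, hpq.2.trans hqr.2⟩

theorem FPath.Prefix.cylinder_subset {p q : FPath G} (h : p.Prefix q) :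
    cylinder q ⊆ cylinder p := by
  rintro x ⟨hs, he⟩
  refine ⟨hs.trans h.1.symm, fun i hi => ?_⟩
  rw [he i (hi.trans_le h.2.length_le)]
  exact (h.2.getElem hi).symm

theorem prefix_of_mem_cylinder_of_length_le {p q : FPath G} {x : IPath G}
    (hp : x ∈ cylinder p) (hq : x ∈ cylinder q) (hl : p.edges.length ≤ q.edges.length) :
    p.Prefix q := by
  refine ⟨hp.1.symm.trans hq.1, ?_⟩
  rw [List.prefix_iff_eq_take]
  refine List.ext_get (by simp [hl]) fun i hip _ => ?_
  have hpi : x.edges i = p.edges[i] := hp.2 i hip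
  have hqi : x.edges i = q.edges[i] := hq.2 i (by omega)
  simp [← hpi, ← hqi]

section DisjointCylinders

variable {ι : Type*} {S : Set ι} {f : ι → FPath G}

theorem eq_of_prefix_of_pairwise_disjoint (hsinks : ∀ v : G.V, ∃ e, G.src e = v)
    (hdisj : S.Pairwise fun a b => cylinder (f a) ∩ cylinder (f b) = ∅)
    {a b : ι} (ha : a ∈ S) (hb : b ∈ S) (hab : (f a).Prefix (f b)) : f a = f b := by
  by_contra hne
  obtain ⟨x, hx⟩ := cylinder_nonempty hsinks (f b)
  exact (hdisj ha hb fun h => hne (congrArg f h)).subset ⟨hab.cylinder_subset hx, hx⟩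

theorem isPartitionOfPath_of_prefix (hsinks : ∀ v : G.V, ∃ e, G.src e = v)
    (hS : S.Finite) (hdisj : S.Pairwise fun a b => cylinder (f a) ∩ cylinder (f b) = ∅)
    (hcover : ⋃ a ∈ S, cylinder (f a) = Set.univ) {ν : FPath G}
    (hν : ∃ μ ∈ f '' S, ν.Prefix μ) :
    IsPartitionOfPath {μ ∈ f '' S | ν.Prefix μ} ν := by
  obtain ⟨_, ⟨b, hb, rfl⟩, hνb⟩ := hν
  refine ⟨(hS.image f).subset (Set.sep_subset _ _), ?_, ?_⟩
  · rintro _ ⟨⟨a, ha, rfl⟩, -⟩ _ ⟨⟨c, hc, rfl⟩, -⟩ hac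
    exact hdisj ha hc fun h => hac (congrArg f h)
  refine (Set.iUnion₂_subset fun μ hμ => hμ.2.cylinder_subset).antisymm fun x hx => ?_
  obtain ⟨a, ha, hxa⟩ := Set.mem_iUnion₂.mp (hcover ▸ Set.mem_univ x)
  have hle : ν.edges.length ≤ (f a).edges.length := by
    by_contra! hlt
    have hab := eq_of_prefix_of_pairwise_disjoint hsinks hdisj ha hb
      ((prefix_of_mem_cylinder_of_length_le hxa hx hlt.le).trans hνb)
    exact absurd hνb.2.length_le (by rw [← hab]; omega)
  exact Set.mem_biUnion ⟨⟨a, ha, rfl⟩, prefix_of_mem_cylinder_of_length_le hx hxa hle⟩ hxa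

end DisjointCylinders

/-- Lemma 2.6: if `ν` is a prefix of some `μ ∈ J₁`, then the subfamily
`{μ' ∈ J₁ : ν ≼ μ'}` is a partition of `ν`; similarly for `J₂`. -/
theorem partition_of_prefix (G : FinGraph) (hG : Standing G)
    (J : Set (FPath G × FPath G)) (hJ : IsUnitaryJ G J) (ν : FPath G) :
    ((∃ μ ∈ Prod.fst '' J, FPath.Prefix ν μ) →
      IsPartitionOfPath {μ' ∈ Prod.fst '' J | FPath.Prefix ν μ'} ν) ∧
    ((∃ μ ∈ Prod.snd '' J, FPath.Prefix ν μ) →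
      IsPartitionOfPath {μ' ∈ Prod.snd '' J | FPath.Prefix ν μ'} ν) :=
  ⟨isPartitionOfPath_of_prefix hG.no_sinks hJ.finite hJ.disj₁ hJ.union₁,
    isPartitionOfPath_of_prefix hG.no_sinks hJ.finite hJ.disj₂ hJ.union₂⟩
end

section
/- Let J be as given, and suppose that every edge of the coding graph E_J is non-negative and that E_J contains no non-positive cycles. Let α ∈ J_1 and let γ ∈ E^* with s(γ) = r(α) (so that αγ ∈ E^*). Then for every l ∈ ℕ there exist finitely many paths A_1, …, A_m in E_J, each with source vertex J_α, such that the L_J-label of each A_i has the form γω_i with |γω_i| ≥ l, and the collection {ω_1, …, ω_m} ⊆ E^* is a partition of r(γ). -/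
variable {G : FinGraph}

/-!
By induction on `k`, the `L_J`-labels of the paths of length `k` in `E_J` starting at `J_α`
partition `r(α)`: the cylinders `Z(μ)`, `(μ, ν) ∈ J`, partition `E^∞`, and since edges are
non-negative, an edge from `(μ₁, e₁ν₁)` to `(μ₂, e₂ν₂)` means `μ₂ = ν₁ β` with `β` its label.
A path through more than `|J|` vertices repeats a vertex; the cycle in between would be
non-positive if the label of the path were empty, so paths of length `c |J|` have labels of
length at least `c`. Once that exceeds `|γ|`, every label meeting `Z(γ)` is of the form `γ ω`,
and these remainders `ω` partition `r(γ)`.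
-/

namespace FPath

theorem ext {p q : FPath G} (hs : p.source = q.source) (he : p.edges = q.edges) : p = q := by
  cases p; cases q; simp_all

lemma range_of_edges_eq_nil {p : FPath G} (h : p.edges = []) : p.range = p.source := by
  simp [FPath.range, h]

lemma range_of_getLast? {p : FPath G} {e : G.E} (h : p.edges.getLast? = some e) :
    p.range = G.rng e := by
  simp [FPath.range, h]

lemma tail_range {p : FPath G} (h : p.edges ≠ []) : p.tail.range = p.range := by
  obtain ⟨e, t, hp⟩ := List.exists_cons_of_ne_nil h
  cases t <;> simp [FPath.range, FPath.tail, hp, List.getLast?_cons]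

def append (p q : FPath G) (h : q.source = p.range) : FPath G where
  source := p.source
  edges := p.edges ++ q.edges
  head_src := by
    intro e he
    rcases hp : p.edges with _ | ⟨a, l⟩
    · rw [hp, List.nil_append] at he
      rw [q.head_src e he, h, range_of_edges_eq_nil hp]
    · rw [hp, List.cons_append, List.head?_cons, Option.mem_some_iff] at he
      exact he ▸ p.head_src a (by simp [hp])
  chain := by
    rw [List.Chain', List.isChain_append]
    refine ⟨p.chain, q.chain, fun x hx y hy => ?_⟩
    rw [q.head_src y hy, h, range_of_getLast? hx]

lemma range_append (p q : FPath G) (h : q.source = p.range) : (p.append q h).range = q.range := by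
  rcases hq : q.edges.getLast? with _ | e
  · have hq' := List.getLast?_eq_none_iff.1 hq
    rw [range_of_edges_eq_nil hq', h]
    simp [FPath.range, FPath.append, hq']
  · rw [range_of_getLast? hq, range_of_getLast? (e := e)]
    simp [FPath.append, List.getLast?_append, hq]

lemma isAppend_append (p q : FPath G) (h : q.source = p.range) : IsAppend p q (p.append q h) :=
  ⟨rfl, h, rfl⟩

lemma Prefix.isAppend {a b : FPath G} (h : a.Prefix b) : ∃ q, IsAppend a q b := by
  obtain ⟨t, ht⟩ := h.2
  have hb := b.chain
  rw [← ht, List.Chain', List.isChain_append] at hb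
  refine ⟨⟨a.range, t, fun e he => ?_, hb.2.1⟩, h.1.symm, rfl, ht.symm⟩
  rcases hl : a.edges.getLast? with _ | f
  · have ha : a.edges = [] := List.getLast?_eq_none_iff.1 hl
    rw [range_of_edges_eq_nil ha, h.1]
    exact b.head_src e (by rw [← ht, ha]; exact he)
  · rw [range_of_getLast? hl]
    exact (hb.2.2 f hl e he).symm

end FPath

namespace IsAppend

lemma eq_append {p q r : FPath G} (h : IsAppend p q r) : r = p.append q h.2.1 :=
  FPath.ext h.1 h.2.2

lemma cancel_left {p q q' r : FPath G} (h : IsAppend p q r) (h' : IsAppend p q' r) : q = q' :=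
  FPath.ext (h.2.1.trans h'.2.1.symm) (List.append_cancel_left (h.2.2.symm.trans h'.2.2))

lemma unique {p q r r' : FPath G} (h : IsAppend p q r) (h' : IsAppend p q r') : r = r' :=
  h.eq_append.trans h'.eq_append.symm

lemma range_eq {p q r : FPath G} (h : IsAppend p q r) : r.range = q.range := by
  rw [h.eq_append, FPath.range_append]

lemma left_prefix {p q r : FPath G} (h : IsAppend p q r) : p.Prefix r :=
  ⟨h.1.symm, q.edges, h.2.2.symm⟩

end IsAppend

namespace IPath

theorem ext {x y : IPath G} (h : x.edges = y.edges) : x = y := by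
  cases x; cases y; simp_all

def drop (x : IPath G) (n : ℕ) : IPath G :=
  ⟨fun i => x.edges (n + i), fun i => x.chain (n + i)⟩

@[simp] lemma drop_edges (x : IPath G) (n i : ℕ) : (x.drop n).edges i = x.edges (n + i) := rfl

lemma source_drop_of_mem_cylinder {x : IPath G} {p : FPath G} (h : x ∈ cylinder p) :
    (x.drop p.edges.length).source = p.range := by
  rcases hl : p.edges.getLast? with _ | e
  · have hp := List.getLast?_eq_none_iff.1 hl
    rw [FPath.range_of_edges_eq_nil hp, ← h.1, hp]
    rfl
  · have hn : p.edges.length - 1 < p.edges.length := by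
      have : p.edges ≠ [] := by rintro h'; simp [h'] at hl
      have := List.length_pos_iff.2 this
      omega
    have he : p.edges.get ⟨_, hn⟩ = e := by
      simpa [List.getLast?_eq_getElem?, List.getElem?_eq_getElem hn] using hl
    rw [FPath.range_of_getLast? hl, ← he, ← h.2 _ hn, x.chain]
    show G.src (x.edges (p.edges.length + 0)) = _
    congr 2
    omega

end IPath

def FPath.appendIPath (p : FPath G) (x : IPath G) (h : x.source = p.range) : IPath G where
  edges i := if hi : i < p.edges.length then p.edges.get ⟨i, hi⟩ else x.edges (i - p.edges.length)
  chain i := by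
    by_cases h1 : i + 1 < p.edges.length
    · rw [dif_pos (by omega), dif_pos h1]
      exact List.isChain_iff_getElem.1 p.chain i h1
    by_cases h0 : i < p.edges.length
    · have hi : i = p.edges.length - 1 := by omega
      have hne : p.edges ≠ [] := List.ne_nil_of_length_pos (by omega)
      rw [dif_pos h0, dif_neg h1, show i + 1 - p.edges.length = 0 by omega]
      refine Eq.trans ?_ h.symm
      rw [FPath.range_of_getLast? (e := p.edges.get ⟨i, h0⟩)]
      simp [List.getLast?_eq_getElem?, hi]
    · rw [dif_neg h0, dif_neg h1, show i + 1 - p.edges.length = i - p.edges.length + 1 by omega]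
      exact x.chain _

namespace FPath

lemma appendIPath_mem_cylinder (p : FPath G) (x : IPath G) (h : x.source = p.range) :
    p.appendIPath x h ∈ cylinder p := by
  refine ⟨?_, fun i hi => dif_pos hi⟩
  show G.src (if hi : 0 < p.edges.length then _ else _) = p.source
  rcases hp : p.edges with _ | ⟨e, t⟩
  · simp only [List.length_nil, lt_self_iff_false, dite_false]
    rw [← range_of_edges_eq_nil hp, ← h]
    rfl
  · simpa [hp] using p.head_src e (by simp [hp])

lemma drop_appendIPath (p : FPath G) (x : IPath G) (h : x.source = p.range) :
    (p.appendIPath x h).drop p.edges.length = x := by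
  apply IPath.ext
  funext i
  simp [FPath.appendIPath]

lemma mem_cylinder_append {p q : FPath G} (h : q.source = p.range) {x : IPath G} :
    x ∈ cylinder (p.append q h) ↔ x ∈ cylinder p ∧ x.drop p.edges.length ∈ cylinder q := by
  simp only [cylinder, FPath.append, Set.mem_ofPred_eq, List.length_append, List.get_eq_getElem,
    IPath.drop_edges]
  constructor
  · rintro ⟨hs, he⟩
    have hxp : x ∈ cylinder p :=
      ⟨hs, fun i hi => by simpa [List.getElem_append_left hi] using he i (by omega)⟩
    refine ⟨⟨hs, fun i hi => hxp.2 i hi⟩, ?_, fun i hi => ?_⟩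
    · rw [IPath.source_drop_of_mem_cylinder hxp, h]
    · rw [he _ (by omega), List.getElem_append_right (by omega)]
      simp
  · rintro ⟨⟨hs, hp⟩, -, hq⟩
    refine ⟨hs, fun i hi => ?_⟩
    by_cases hip : i < p.edges.length
    · rw [List.getElem_append_left hip, hp i hip]
    · rw [List.getElem_append_right (by omega), ← hq _ (by omega)]
      congr 1
      omega

lemma mem_cylinder_nil {x : IPath G} {v : G.V} : x ∈ cylinder (FPath.nil G v) ↔ x.source = v :=
  ⟨fun h => h.1, fun h => ⟨h, fun i hi => absurd hi (Nat.not_lt_zero i)⟩⟩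

lemma prefix_of_mem_cylinder {a b : FPath G} {x : IPath G} (ha : x ∈ cylinder a)
    (hb : x ∈ cylinder b) (hle : a.edges.length ≤ b.edges.length) : a.Prefix b := by
  refine ⟨ha.1.symm.trans hb.1, ?_⟩
  rw [List.prefix_iff_eq_take]
  apply List.ext_getElem (by simp [hle])
  intro i h1 h2
  have e1 := ha.2 i h1
  have e2 := hb.2 i (by omega)
  simp only [List.get_eq_getElem] at e1 e2
  rw [List.getElem_take, ← e1, ← e2]

lemma prefix_or_prefix_of_mem_cylinder {a b : FPath G} {x : IPath G} (ha : x ∈ cylinder a)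
    (hb : x ∈ cylinder b) : a.Prefix b ∨ b.Prefix a :=
  (le_total a.edges.length b.edges.length).imp (prefix_of_mem_cylinder ha hb)
    (prefix_of_mem_cylinder hb ha)

end FPath

namespace IsAppend

variable {p q r : FPath G}

lemma mem_cylinder_iff (h : IsAppend p q r) {x : IPath G} :
    x ∈ cylinder r ↔ x ∈ cylinder p ∧ x.drop p.edges.length ∈ cylinder q := by
  rw [h.eq_append, FPath.mem_cylinder_append]

lemma appendIPath_mem_cylinder_iff (h : IsAppend p q r) {x : IPath G} (hx : x.source = p.range) :
    p.appendIPath x hx ∈ cylinder r ↔ x ∈ cylinder q := by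
  rw [h.mem_cylinder_iff, FPath.drop_appendIPath]
  exact and_iff_right (FPath.appendIPath_mem_cylinder p x hx)

end IsAppend

lemma IsPartitionOf.residuals {S : Set (FPath G)} {γ : FPath G} (hS : IsPartitionOf S γ.source)
    (hlen : ∀ s ∈ S, γ.edges.length ≤ s.edges.length) :
    IsPartitionOf {ω | ∃ s ∈ S, IsAppend γ ω s} γ.range := by
  obtain ⟨hfin, hdisj, hunion⟩ := hS
  refine ⟨?_, ?_, ?_⟩
  · refine (hfin.biUnion fun s _ => Set.Subsingleton.finite
      (s := {ω | IsAppend γ ω s}) fun _ h _ h' => IsAppend.cancel_left h h').subset ?_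
    rintro ω ⟨s, hs, h⟩
    exact Set.mem_biUnion hs h
  · rintro ω₁ ⟨s₁, hs₁, h₁⟩ ω₂ ⟨s₂, hs₂, h₂⟩ hne
    refine Set.eq_empty_of_forall_notMem fun x ⟨hx₁, hx₂⟩ => hne ?_
    have hx : x.source = γ.range := hx₁.1.trans h₁.2.1
    obtain rfl : s₁ = s₂ := by
      by_contra hs
      exact (hdisj s₁ hs₁ s₂ hs₂ hs).subset
        ⟨(h₁.appendIPath_mem_cylinder_iff hx).2 hx₁, (h₂.appendIPath_mem_cylinder_iff hx).2 hx₂⟩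
    exact h₁.cancel_left h₂
  · ext x
    simp only [Set.mem_iUnion, FPath.mem_cylinder_nil, exists_prop]
    constructor
    · rintro ⟨ω, ⟨s, -, h⟩, hx⟩
      exact hx.1.trans h.2.1
    · intro hx
      have hy : γ.appendIPath x hx ∈ ⋃ s ∈ S, cylinder s :=
        hunion ▸ FPath.mem_cylinder_nil.2 (FPath.appendIPath_mem_cylinder γ x hx).1
      obtain ⟨s, hs, hys⟩ := Set.mem_iUnion₂.1 hy
      obtain ⟨ω, h⟩ := (FPath.prefix_of_mem_cylinder (FPath.appendIPath_mem_cylinder γ x hx) hys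
        (hlen s hs)).isAppend
      exact ⟨ω, ⟨s, hs, h⟩, (h.appendIPath_mem_cylinder_iff hx).1 hys⟩

theorem List.exists_infix_cons_append_singleton_of_not_nodup {α : Type*} {l : List α}
    (h : ¬ l.Nodup) : ∃ a t, a :: (t ++ [a]) <:+: l := by
  obtain ⟨a, ha⟩ : ∃ a, List.Sublist [a, a] l := by simpa [List.nodup_iff_sublist] using h
  obtain ⟨r₁, r₂, rfl, h₁, h₂⟩ := List.cons_sublist_iff.1 ha
  obtain ⟨s, t, rfl⟩ := List.append_of_mem h₁
  obtain ⟨u, w, rfl⟩ := List.append_of_mem (List.singleton_sublist.1 h₂)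
  exact ⟨a, t ++ u, s, w, by simp⟩

section CodingGraph

variable {J : Set (FPath G × FPath G)}

lemma tail_range_of_mem (hJ : IsUnitaryJ G J) {v : FPath G × FPath G} (hv : v ∈ J) :
    v.2.tail.range = v.1.range := by
  rw [FPath.tail_range (hJ.ne_nil v hv), hJ.rng_eq v hv]

lemma CGAdj.prefix (hnn : AllEdgesNonneg G J) {v q : FPath G × FPath G} (hv : v ∈ J)
    (hq : q ∈ J) (hadj : CGAdj v q) : v.2.tail.Prefix q.1 := by
  have hd := hnn v hv q hq hadj
  rcases hadj with h | h
  · exact h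
  · refine ⟨h.1.symm, ?_⟩
    rw [h.2.eq_of_length_le (by unfold cgDeg at hd; omega)]

namespace IsLabelOf

variable {L : List (FPath G × FPath G)} {lab : FPath G}

lemma unique {lab' : FPath G} (h : IsLabelOf L lab) (h' : IsLabelOf L lab') : lab = lab' := by
  induction h generalizing lab' with
  | single p γ he hs =>
    cases h' with
    | single _ γ' he' hs' => exact FPath.ext (hs.trans hs'.symm) (he.trans he'.symm)
  | cons p q rest α γ δ h1 h2 h3 ih =>
    cases h' with
    | cons _ _ _ α' γ' δ' h1' h2' h3' =>
      obtain rfl : α = α' := h1.cancel_left h1'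
      obtain rfl : γ = γ' := ih h2'
      exact h3.unique h3'

lemma source_eq (hJ : IsUnitaryJ G J) {v : FPath G × FPath G} (h : IsLabelOf (v :: L) lab)
    (hv : v ∈ J) : lab.source = v.1.range := by
  cases h with
  | single _ _ _ hs => exact hs
  | cons _ _ _ α _ _ h1 _ h3 => rw [h3.1, h1.2.1, tail_range_of_mem hJ hv]

lemma isChain_cgDeg_nonpos (h : IsLabelOf L lab) (h0 : lab.edges = []) :
    L.IsChain fun a b => cgDeg a b ≤ 0 := by
  induction h with
  | single p => exact List.isChain_singleton p
  | cons p q rest α γ δ h1 _ h3 ih =>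
    rw [h3.2.2, List.append_eq_nil_iff] at h0
    refine List.isChain_cons_cons.2 ⟨?_, ih h0.2⟩
    simp [cgDeg, h1.2.2, h0.1]

lemma split (hJ : IsUnitaryJ G J) {L₁ L₂ : List (FPath G × FPath G)} {w : FPath G × FPath G}
    (hmem : ∀ u ∈ L₁ ++ w :: L₂, u ∈ J) (h : IsLabelOf (L₁ ++ w :: L₂) lab) :
    ∃ lab₁ lab₂, IsLabelOf (L₁ ++ [w]) lab₁ ∧ IsLabelOf (w :: L₂) lab₂ ∧
      lab.edges = lab₁.edges ++ lab₂.edges := by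
  induction L₁ generalizing lab with
  | nil => exact ⟨FPath.nil G w.1.range, lab, .single w _ rfl rfl, h, rfl⟩
  | cons a L₁ ih =>
    rw [List.cons_append] at h
    generalize hM : L₁ ++ w :: L₂ = M at h
    cases h with
    | single => simp at hM
    | cons _ q rest α γ δ hα hγ hδ =>
      obtain ⟨lab₁, lab₂, h₁, h₂, hedges⟩ :=
        ih (fun u hu => hmem u (List.mem_cons_of_mem a hu)) (hM ▸ hγ)
      obtain ⟨rest', hrest'⟩ : ∃ rest', L₁ ++ [w] = q :: rest' := by
        cases L₁ <;> simp_all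
      have hq : q ∈ J := hmem q (by simp [hM])
      have hs : lab₁.source = α.range := by
        rw [← hα.range_eq]
        exact (hrest' ▸ h₁ : IsLabelOf (q :: rest') lab₁).source_eq hJ hq
      refine ⟨α.append lab₁ hs, lab₂, ?_, h₂, ?_⟩
      · rw [List.cons_append, hrest']
        exact .cons a q rest' α lab₁ _ hα (hrest' ▸ h₁) (α.isAppend_append lab₁ hs)
      · simp [hδ.2.2, hedges, FPath.append]

lemma edges_ne_nil_of_ncard_lt (hJ : J.Finite) (hnc : ¬ HasNonposCycle G J)
    (hmem : ∀ u ∈ L, u ∈ J) (hchain : L.IsChain CGAdj) (h : IsLabelOf L lab)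
    (hlen : J.ncard < L.length) : lab.edges ≠ [] := by
  classical
  intro h0
  have hnd : ¬ L.Nodup := fun hnd => by
    have : L.toFinset.card ≤ J.ncard := by
      rw [← Set.ncard_coe_finset]
      exact Set.ncard_le_ncard (fun u hu => hmem u (by simpa using hu)) hJ
    rw [List.toFinset_card_of_nodup hnd] at this
    omega
  obtain ⟨a, t, hinf⟩ := List.exists_infix_cons_append_singleton_of_not_nodup hnd
  exact hnc ⟨⟨a :: (t ++ [a]), List.cons_ne_nil _ _, fun u hu => hmem u (hinf.subset hu),
    hchain.infix hinf⟩, by simp, by simp, (h.isChain_cgDeg_nonpos h0).infix hinf⟩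

lemma le_length (hJ : IsUnitaryJ G J) (hnc : ¬ HasNonposCycle G J) (c : ℕ)
    (hmem : ∀ u ∈ L, u ∈ J) (hchain : L.IsChain CGAdj) (h : IsLabelOf L lab)
    (hlen : c * J.ncard < L.length) : c ≤ lab.edges.length := by
  induction c generalizing L lab with
  | zero => exact Nat.zero_le _
  | succ c ih =>
    rw [Nat.succ_mul] at hlen
    obtain ⟨L₁, R, rfl, hL₁⟩ : ∃ L₁ R, L = L₁ ++ R ∧ L₁.length = J.ncard :=
      ⟨L.take J.ncard, L.drop J.ncard, (List.take_append_drop _ _).symm,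
        List.length_take_of_le (by omega)⟩
    rcases R with _ | ⟨w, L₂⟩
    · rw [List.append_nil] at hlen
      omega
    obtain ⟨lab₁, lab₂, h₁, h₂, hedges⟩ := h.split hJ hmem
    have hpre : L₁ ++ [w] <+: L₁ ++ w :: L₂ := ⟨L₂, by simp⟩
    have hsuf : w :: L₂ <:+ L₁ ++ w :: L₂ := List.suffix_append _ _
    have hne : lab₁.edges ≠ [] :=
      h₁.edges_ne_nil_of_ncard_lt hJ.finite hnc (fun u hu => hmem u (hpre.subset hu))
        (hchain.infix hpre.isInfix) (by simp [hL₁])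
    have hc : c ≤ lab₂.edges.length :=
      ih (fun u hu => hmem u (hsuf.subset hu)) (hchain.infix hsuf.isInfix) h₂
        (by simp only [List.length_append, List.length_cons] at hlen ⊢; omega)
    rw [hedges, List.length_append]
    have := List.length_pos_iff.2 hne
    omega

end IsLabelOf

end CodingGraph

section Labels

variable {J : Set (FPath G × FPath G)}

def cgLabels (J : Set (FPath G × FPath G)) (k : ℕ) (v : FPath G × FPath G) : Set (FPath G) :=
  {lab | ∃ L : List (FPath G × FPath G), L.length = k ∧ (∀ u ∈ v :: L, u ∈ J) ∧
    (v :: L).IsChain CGAdj ∧ IsLabelOf (v :: L) lab}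

lemma mem_cgLabels_zero_iff {v : FPath G × FPath G} (hv : v ∈ J) {lab : FPath G} :
    lab ∈ cgLabels J 0 v ↔ lab = FPath.nil G v.1.range := by
  constructor
  · rintro ⟨L, hL, -, -, h⟩
    rw [List.length_eq_zero_iff.1 hL] at h
    cases h with
    | single _ _ he hs => exact FPath.ext hs he
  · rintro rfl
    exact ⟨[], rfl, by simpa using hv, List.isChain_singleton v, .single v _ rfl rfl⟩

lemma mem_cgLabels_succ_iff {v : FPath G × FPath G} (hv : v ∈ J) {k : ℕ} {lab : FPath G} :
    lab ∈ cgLabels J (k + 1) v ↔ ∃ q ∈ J, ∃ α δ, IsAppend v.2.tail α q.1 ∧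
      δ ∈ cgLabels J k q ∧ IsAppend α δ lab := by
  constructor
  · rintro ⟨_ | ⟨q, rest⟩, hL, hmem, hchain, h⟩
    · simp at hL
    cases h with
    | cons _ _ _ α δ _ hα hδ hαδ =>
      exact ⟨q, hmem q (by simp), α, δ, hα,
        ⟨rest, by simpa using hL, fun u hu => hmem u (List.mem_cons_of_mem v hu), hchain.tail, hδ⟩,
        hαδ⟩
  · rintro ⟨q, -, α, δ, hα, ⟨rest, hrest, hmem, hchain, hδ⟩, hαδ⟩
    refine ⟨q :: rest, by simp [hrest], ?_, ?_, .cons v q rest α δ lab hα hδ hαδ⟩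
    · rintro u (_ | ⟨_, hu⟩)
      exacts [hv, hmem u hu]
    · exact List.isChain_cons_cons.2 ⟨Or.inl hα.left_prefix, hchain⟩

lemma source_of_mem_cgLabels (hJ : IsUnitaryJ G J) {k : ℕ} {v : FPath G × FPath G} (hv : v ∈ J)
    {lab : FPath G} (h : lab ∈ cgLabels J k v) : lab.source = v.1.range := by
  obtain ⟨L, -, -, -, hlab⟩ := h
  exact hlab.source_eq hJ hv

lemma exists_mem_cgLabels_mem_cylinder (hJ : IsUnitaryJ G J) (hnn : AllEdgesNonneg G J) (k : ℕ) :
    ∀ v ∈ J, ∀ x : IPath G, x.source = v.1.range → ∃ lab ∈ cgLabels J k v, x ∈ cylinder lab := by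
  induction k with
  | zero =>
    intro v hv x hx
    exact ⟨_, (mem_cgLabels_zero_iff hv).2 rfl, FPath.mem_cylinder_nil.2 hx⟩
  | succ k ih =>
    intro v hv x hx
    rw [← tail_range_of_mem hJ hv] at hx
    obtain ⟨q, hq, hyq⟩ := Set.mem_iUnion₂.1
      (hJ.union₁.symm ▸ Set.mem_univ (v.2.tail.appendIPath x hx))
    obtain ⟨α, hα⟩ := (CGAdj.prefix hnn hv hq
      (FPath.prefix_or_prefix_of_mem_cylinder (FPath.appendIPath_mem_cylinder _ x hx) hyq)).isAppend
    have hxα : x ∈ cylinder α := (hα.appendIPath_mem_cylinder_iff hx).1 hyq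
    obtain ⟨δ, hδ, hxδ⟩ := ih q hq (x.drop α.edges.length)
      (by rw [IPath.source_drop_of_mem_cylinder hxα, hα.range_eq])
    have hs : δ.source = α.range := by rw [source_of_mem_cgLabels hJ hq hδ, hα.range_eq]
    exact ⟨α.append δ hs, (mem_cgLabels_succ_iff hv).2
      ⟨q, hq, α, δ, hα, hδ, α.isAppend_append δ hs⟩,
      (FPath.mem_cylinder_append hs).2 ⟨hxα, hxδ⟩⟩

lemma eq_of_mem_cgLabels_of_cylinder_inter_nonempty (hJ : IsUnitaryJ G J) (k : ℕ) :
    ∀ v ∈ J, ∀ lab₁ ∈ cgLabels J k v, ∀ lab₂ ∈ cgLabels J k v,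
      (cylinder lab₁ ∩ cylinder lab₂).Nonempty → lab₁ = lab₂ := by
  induction k with
  | zero =>
    intro v hv lab₁ h₁ lab₂ h₂ _
    rw [(mem_cgLabels_zero_iff hv).1 h₁, (mem_cgLabels_zero_iff hv).1 h₂]
  | succ k ih =>
    intro v hv lab₁ h₁ lab₂ h₂ ⟨x, hx₁, hx₂⟩
    obtain ⟨q₁, hq₁, α₁, δ₁, hα₁, hδ₁, h₁⟩ := (mem_cgLabels_succ_iff hv).1 h₁
    obtain ⟨q₂, hq₂, α₂, δ₂, hα₂, hδ₂, h₂⟩ := (mem_cgLabels_succ_iff hv).1 h₂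
    obtain ⟨hxα₁, hxδ₁⟩ := h₁.mem_cylinder_iff.1 hx₁
    obtain ⟨hxα₂, hxδ₂⟩ := h₂.mem_cylinder_iff.1 hx₂
    have hx : x.source = v.2.tail.range := hxα₁.1.trans hα₁.2.1
    obtain rfl : q₁ = q₂ := by
      by_contra hne
      exact (hJ.disj₁ q₁ hq₁ q₂ hq₂ hne).subset
        ⟨(hα₁.appendIPath_mem_cylinder_iff hx).2 hxα₁, (hα₂.appendIPath_mem_cylinder_iff hx).2 hxα₂⟩
    obtain rfl : α₁ = α₂ := hα₁.cancel_left hα₂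
    obtain rfl : δ₁ = δ₂ := ih q₁ hq₁ δ₁ hδ₁ δ₂ hδ₂ ⟨_, hxδ₁, hxδ₂⟩
    exact h₁.unique h₂

lemma cgLabels_finite (hJ : J.Finite) (k : ℕ) (v : FPath G × FPath G) :
    (cgLabels J k v).Finite := by
  have : Finite J := hJ.to_subtype
  have hpaths : {L : List (FPath G × FPath G) | L.length = k ∧ ∀ u ∈ L, u ∈ J}.Finite := by
    refine ((List.finite_length_eq J k).image (List.map Subtype.val)).subset ?_
    rintro L ⟨hL, hmem⟩
    lift L to List J using hmem
    exact ⟨L, by simpa using hL, rfl⟩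
  refine (hpaths.biUnion fun L _ => Set.Subsingleton.finite (s := {lab | IsLabelOf (v :: L) lab})
    fun _ h _ h' => h.unique h').subset ?_
  rintro lab ⟨L, hL, hmem, -, hlab⟩
  exact Set.mem_biUnion ⟨hL, fun u hu => hmem u (List.mem_cons_of_mem v hu)⟩ hlab

lemma isPartitionOf_cgLabels (hJ : IsUnitaryJ G J) (hnn : AllEdgesNonneg G J) (k : ℕ)
    {v : FPath G × FPath G} (hv : v ∈ J) : IsPartitionOf (cgLabels J k v) v.1.range := by
  refine ⟨cgLabels_finite hJ.finite k v, fun lab₁ h₁ lab₂ h₂ hne => ?_, ?_⟩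
  · by_contra hint
    exact hne (eq_of_mem_cgLabels_of_cylinder_inter_nonempty hJ k v hv lab₁ h₁ lab₂ h₂
      (Set.nonempty_iff_ne_empty.2 hint))
  · ext x
    simp only [Set.mem_iUnion, FPath.mem_cylinder_nil, exists_prop]
    constructor
    · rintro ⟨lab, hlab, hx⟩
      exact hx.1.trans (source_of_mem_cgLabels hJ hv hlab)
    · exact exists_mem_cgLabels_mem_cylinder hJ hnn k v hv x

lemma exists_cgPath_of_mem_cgLabels {k : ℕ} {v : FPath G × FPath G} {lab : FPath G}
    (h : lab ∈ cgLabels J k v) :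
    ∃ A : CGPath G J, A.verts.head A.ne = v ∧ IsLabelOf A.verts lab := by
  obtain ⟨L, -, hmem, hchain, hlab⟩ := h
  exact ⟨⟨v :: L, List.cons_ne_nil v L, hmem, hchain⟩, rfl, hlab⟩

end Labels

theorem diag_partition_general (G : FinGraph)
    (J : Set (FPath G × FPath G)) (hJ : IsUnitaryJ G J)
    (hnn : AllEdgesNonneg G J) (hnc : ¬ HasNonposCycle G J)
    (p : FPath G × FPath G) (hp : p ∈ J)
    (γ : FPath G) (hγ : γ.source = FPath.range p.1) (l : ℕ) :
    ∃ (m : ℕ) (A : Fin m → CGPath G J) (ωf : Fin m → FPath G),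
      (∀ i, (A i).verts.head (A i).ne = p) ∧
      (∀ i, ∃ lab : FPath G, IsLabelOf (A i).verts lab ∧ IsAppend γ (ωf i) lab ∧
        l ≤ lab.edges.length) ∧
      IsPartitionOf (Set.range ωf) (FPath.range γ) := by
  set c := max l γ.edges.length
  have hlen : ∀ lab ∈ cgLabels J (c * J.ncard) p, c ≤ lab.edges.length := by
    rintro lab ⟨L, hL, hmem, hchain, hlab⟩
    exact hlab.le_length hJ hnc c hmem hchain (by simp [hL])
  have hpart := (hγ ▸ isPartitionOf_cgLabels hJ hnn (c * J.ncard) hp).residuals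
    fun lab h => (le_max_right _ _).trans (hlen lab h)
  obtain ⟨m, ωf, -, hrange⟩ := hpart.1.fin_param
  have hpaths : ∀ i, ∃ A : CGPath G J, A.verts.head A.ne = p ∧ ∃ lab : FPath G,
      IsLabelOf A.verts lab ∧ IsAppend γ (ωf i) lab ∧ l ≤ lab.edges.length := by
    intro i
    obtain ⟨lab, hlab, hγlab⟩ : ωf i ∈ _ := hrange ▸ Set.mem_range_self i
    obtain ⟨A, hA, hAlab⟩ := exists_cgPath_of_mem_cgLabels hlab
    exact ⟨A, hA, lab, hAlab, hγlab, (le_max_left _ _).trans (hlen lab hlab)⟩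
  choose A hA hAlab using hpaths
  exact ⟨m, A, ωf, hA, hAlab, hrange ▸ hpart⟩

/-- Corollary 3.7: assuming all edges of `E_J` are non-negative and
there is no non-positive cycle, for `(α, β) ∈ J` and `γ` with `s(γ) = r(α)`, for every
`l` there are paths `A₁, …, A_m` in `E_J` with source `J_α` whose `L_J`-labels are of
the form `γωᵢ` with `|γωᵢ| ≥ l` and `{ωᵢ}` a partition of `r(γ)`. -/
theorem diag_partition (G : FinGraph) (hG : Standing G)
    (J : Set (FPath G × FPath G)) (hJ : IsUnitaryJ G J)
    (hnn : AllEdgesNonneg G J) (hnc : ¬ HasNonposCycle G J)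
    (p : FPath G × FPath G) (hp : p ∈ J)
    (γ : FPath G) (hγ : γ.source = FPath.range p.1) (l : ℕ) :
    ∃ (m : ℕ) (A : Fin m → CGPath G J) (ωf : Fin m → FPath G),
      (∀ i, (A i).verts.head (A i).ne = p) ∧
      (∀ i, ∃ lab : FPath G, IsLabelOf (A i).verts lab ∧ IsAppend γ (ωf i) lab ∧
        l ≤ lab.edges.length) ∧
      IsPartitionOf (Set.range ωf) (FPath.range γ) :=
  diag_partition_general G J hJ hnn hnc p hp γ hγ l
end

section
/- Let J be as given and let J' be the splitting of J at a vertex (μ, eν) ∈ J all of whose outgoing edges in the coding graph E_J are positive. Then edges of E_J between vertices different from (μ, eν) remain edges of E_{J'} with the same degree, and the new edges of E_{J'} are described as follows: (SE1) if E_J has an edge η from (μ, eν) to (δ, gγ) with μ ≠ δ, then there is exactly one f ∈ E^1 with s(f) = r(μ) such that E_{J'} has an edge η' from (μf, eνf) to (δ, gγ), and deg(η') = deg(η) − 1; (SE2) if E_J has an edge η from (μ, eν) to itself, then there is exactly one f ∈ E^1 with s(f) = r(μ) such that for every b ∈ E^1 with s(b) = r(μ) the graph E_{J'} has an edge η'_b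 from (μf, eνf) to (μb, eνb), and deg(η'_b) = deg(η); (SE3) if E_J has a non-negative edge η from (δ, gγ) to (μ, eν) with μ ≠ δ, then for every f ∈ E^1 with s(f) = r(μ) the graph E_{J'} has an edge η'_f from (δ, gγ) to (μf, eνf), and deg(η'_f) = deg(η) + 1; (SE4) if E_J has a negative edge η from (δ, gγ) to (μ, eν) with μ ≠ δ, then there is exactly one f ∈ E^1 with s(f) = r(μ) such that E_{J'} has an edge η' from (δ, gγ) to (μf, eνf), and deg(η') = deg(η) + 1. -/
variable {G : FinGraph}

/-!
Write `p = (μ, eν)`. Edges of the coding graph are prefix-comparabilities, so an edge out of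
`p` is positive exactly when `ν` is a proper prefix of the first coordinate of its target, and
then exactly one edge `f` continues `ν` inside that path. Dually, a negative edge into `p`
makes `μ` a proper prefix of the tail at its source, continued by exactly one `f`, while a
non-negative edge into `p` makes that tail a prefix of `μ`, hence of every `μf`. Passing from
`(μ, eν)` to `(μf, eνf)` lengthens `ν` and `μ` by one edge, which shifts the degrees of outgoing
edges by `-1` and of incoming edges by `+1`.
-/

theorem List.eq_of_append_singleton_prefix {α : Type*} {l m : List α} {x y : α}
    (hx : l ++ [x] <+: m) (hy : l ++ [y] <+: m) : x = y := by
  have h : l ++ [x] = l ++ [y] :=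
    (List.prefix_of_prefix_length_le hx hy (by simp)).eq_of_length (by simp)
  simpa using h

theorem List.prefix_of_comparable_of_length_le {α : Type*} {l m : List α}
    (h : l <+: m ∨ m <+: l) (hlen : l.length ≤ m.length) : l <+: m := by
  rcases h with h | h
  · exact h
  · rw [h.eq_of_length (le_antisymm h.length_le hlen)]

namespace FPath

theorem Prefix.of_comparable {a b : FPath G} (h : a.Prefix b ∨ b.Prefix a)
    (hlen : a.edges.length ≤ b.edges.length) : a.Prefix b :=
  ⟨h.elim (·.1) (·.1.symm), List.prefix_of_comparable_of_length_le (h.imp (·.2) (·.2)) hlen⟩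

theorem Prefix.trans_isSnoc {a b b' : FPath G} {f : G.E} (h : a.Prefix b) (hb : IsSnoc b f b') :
    a.Prefix b' :=
  ⟨h.1.trans hb.1.symm, hb.2 ▸ h.2.trans (List.prefix_append _ _)⟩

theorem src_eq_range_of_edges_eq {a b : FPath G} {f : G.E} {t : List G.E}
    (hs : a.source = b.source) (he : b.edges = a.edges ++ f :: t) : G.src f = a.range := by
  rcases a.edges.eq_nil_or_concat with ha | ⟨l, e, ha⟩
  · rw [ha, List.nil_append] at he
    simp [FPath.range, ha, hs, b.head_src f (by simp [he])]
  · rw [ha, List.concat_eq_append, List.append_assoc, List.singleton_append] at he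
    have hc := b.chain
    rw [List.Chain', he, List.isChain_append_cons_cons] at hc
    simp [FPath.range, ha, hc.2.1]

theorem Prefix.exists_next_edge {a b : FPath G} (h : a.Prefix b)
    (hlt : a.edges.length < b.edges.length) :
    ∃ f, G.src f = a.range ∧ a.edges ++ [f] <+: b.edges := by
  obtain ⟨hs, t, ht⟩ := h
  cases t with
  | nil => simp [← ht] at hlt
  | cons f t => exact ⟨f, src_eq_range_of_edges_eq hs ht.symm, t, by simp [← ht]⟩

theorem range_tail (p : FPath G) (h : p.edges ≠ []) : p.tail.range = p.range := by
  obtain ⟨e, l, hl⟩ := List.exists_cons_of_ne_nil h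
  simp only [FPath.range, FPath.tail, hl, List.head?_cons, List.tail_cons, List.getLast?_cons,
    Option.elim]
  cases l.getLast? <;> rfl

def snoc (p : FPath G) (f : G.E) (h : G.src f = p.range) : FPath G where
  source := p.source
  edges := p.edges ++ [f]
  head_src := by
    intro x hx
    rcases hl : p.edges with _ | ⟨a, l⟩
    · simp only [hl, List.nil_append, List.head?_cons, Option.mem_def, Option.some.injEq] at hx
      subst hx
      simp [h, FPath.range, hl]
    · simp only [hl, List.cons_append, List.head?_cons, Option.mem_def, Option.some.injEq] at hx
      subst hx
      exact p.head_src _ (by simp [hl])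
  chain := by
    rw [List.Chain', List.isChain_append]
    refine ⟨p.chain, List.isChain_singleton f, fun x hx y hy => ?_⟩
    simp only [List.head?_cons, Option.mem_def, Option.some.injEq] at hy
    subst hy
    simp [h, FPath.range, Option.mem_def.mp hx]

end FPath

namespace IsSnoc

variable {a a' b : FPath G} {f g : G.E}

theorem tail (h : IsSnoc a f a') (hne : a.edges ≠ []) : IsSnoc a.tail f a'.tail := by
  obtain ⟨hs, he⟩ := h
  cases hl : a.edges with
  | nil => contradiction
  | cons e l => simp [IsSnoc, FPath.tail, hs, he, hl]

theorem prefix_of_prefix (ha : IsSnoc a f a') (h : a.Prefix b) (hf : a.edges ++ [f] <+: b.edges) :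
    a'.Prefix b :=
  ⟨ha.1.trans h.1, ha.2 ▸ hf⟩

theorem eq_of_comparable (ha : IsSnoc a g a') (hcomp : a'.Prefix b ∨ b.Prefix a')
    (hf : a.edges ++ [f] <+: b.edges) : g = f := by
  have hlen : a'.edges.length ≤ b.edges.length := by simpa [ha.2] using hf.length_le
  have hg := List.prefix_of_comparable_of_length_le (hcomp.imp (·.2) (·.2)) hlen
  rw [ha.2] at hg
  exact List.eq_of_append_singleton_prefix hg hf

end IsSnoc

section Splitting

variable {J J' : Set (FPath G × FPath G)} {p q : FPath G × FPath G}

theorem cgDeg_eq_sub_one_of_isSnoc_tail {p' : FPath G × FPath G} {f : G.E}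
    (h : IsSnoc p.2.tail f p'.2.tail) : cgDeg p' q = cgDeg p q - 1 := by
  simp only [cgDeg, h.2, List.length_append, List.length_singleton]
  push_cast; ring

theorem cgDeg_eq_add_one_of_isSnoc_fst {q' : FPath G × FPath G} {f : G.E}
    (h : IsSnoc q.1 f q'.1) : cgDeg p q' = cgDeg p q + 1 := by
  simp only [cgDeg, h.2, List.length_append, List.length_singleton]
  push_cast; ring

theorem IsUnitaryJ.range_tail_snd (hJ : IsUnitaryJ G J) (hp : p ∈ J) :
    p.2.tail.range = p.1.range := by
  rw [p.2.range_tail (hJ.ne_nil p hp), hJ.rng_eq p hp]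

theorem IsUnitaryJ.exists_isSnoc (hJ : IsUnitaryJ G J) (hp : p ∈ J) {f : G.E}
    (hf : G.src f = p.1.range) : ∃ p' : FPath G × FPath G, IsSnoc p.1 f p'.1 ∧ IsSnoc p.2 f p'.2 :=
  ⟨(p.1.snoc f hf, p.2.snoc f (hf.trans (hJ.rng_eq p hp))),
    ⟨rfl, rfl⟩, ⟨rfl, rfl⟩⟩

theorem IsSplitting.mem_of_ne (hsplit : IsSplitting G J p J') (hq : q ∈ J) (hqp : q ≠ p) :
    q ∈ J' :=
  (hsplit.2 q).2 (Or.inl ⟨hq, hqp⟩)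

theorem IsSplitting.mem_of_isSnoc (hsplit : IsSplitting G J p J') {f : G.E}
    (hf : G.src f = p.1.range) (h₁ : IsSnoc p.1 f q.1) (h₂ : IsSnoc p.2 f q.2) : q ∈ J' :=
  (hsplit.2 q).2 (Or.inr ⟨f, hf, h₁, h₂⟩)

theorem IsSplitting.existsUnique_snoc_cgAdj_left (hJ : IsUnitaryJ G J)
    (hsplit : IsSplitting G J p J') (hout : AllOutPositive G J p) (hq : q ∈ J) (hadj : CGAdj p q) :
    ∃! f : G.E, G.src f = FPath.range p.1 ∧
      ∃ p' : FPath G × FPath G, (IsSnoc p.1 f p'.1 ∧ IsSnoc p.2 f p'.2) ∧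
        p' ∈ J' ∧ CGAdj p' q ∧ cgDeg p' q = cgDeg p q - 1 := by
  have hp := hsplit.1
  have hlt : p.2.tail.edges.length < q.1.edges.length := by
    have := hout q hq hadj; unfold cgDeg at this; omega
  have hpre := FPath.Prefix.of_comparable hadj hlt.le
  obtain ⟨f, hf, hfq⟩ := hpre.exists_next_edge hlt
  rw [hJ.range_tail_snd hp] at hf
  refine ⟨f, ⟨hf, ?_⟩, ?_⟩
  · obtain ⟨p', h₁, h₂⟩ := hJ.exists_isSnoc hp hf
    have ht := h₂.tail (hJ.ne_nil p hp)
    exact ⟨p', ⟨h₁, h₂⟩, hsplit.mem_of_isSnoc hf h₁ h₂, Or.inl (ht.prefix_of_prefix hpre hfq),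
      cgDeg_eq_sub_one_of_isSnoc_tail ht⟩
  · rintro g ⟨-, p', ⟨-, h₂⟩, -, hadj', -⟩
    exact (h₂.tail (hJ.ne_nil p hp)).eq_of_comparable hadj' hfq

theorem IsSplitting.existsUnique_snoc_cgAdj_self (hJ : IsUnitaryJ G J)
    (hsplit : IsSplitting G J p J') (hout : AllOutPositive G J p) (hadj : CGAdj p p) :
    ∃! f : G.E, G.src f = FPath.range p.1 ∧
      ∀ b : G.E, G.src b = FPath.range p.1 → ∀ p' p'' : FPath G × FPath G,
        (IsSnoc p.1 f p'.1 ∧ IsSnoc p.2 f p'.2) →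
        (IsSnoc p.1 b p''.1 ∧ IsSnoc p.2 b p''.2) →
        p' ∈ J' ∧ p'' ∈ J' ∧ CGAdj p' p'' ∧ cgDeg p' p'' = cgDeg p p := by
  have hp := hsplit.1
  have hlt : p.2.tail.edges.length < p.1.edges.length := by
    have := hout p hp hadj; unfold cgDeg at this; omega
  have hpre := FPath.Prefix.of_comparable hadj hlt.le
  obtain ⟨f, hf, hfμ⟩ := hpre.exists_next_edge hlt
  rw [hJ.range_tail_snd hp] at hf
  refine ⟨f, ⟨hf, fun b hb p' p'' ⟨h₁, h₂⟩ ⟨h₁', h₂'⟩ => ?_⟩, fun g ⟨hg, H⟩ => ?_⟩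
  · have ht := h₂.tail (hJ.ne_nil p hp)
    refine ⟨hsplit.mem_of_isSnoc hf h₁ h₂, hsplit.mem_of_isSnoc hb h₁' h₂',
      Or.inl ((ht.prefix_of_prefix hpre hfμ).trans_isSnoc h₁'), ?_⟩
    rw [cgDeg_eq_sub_one_of_isSnoc_tail ht, cgDeg_eq_add_one_of_isSnoc_fst h₁', add_sub_cancel_right]
  · obtain ⟨p', h₁, h₂⟩ := hJ.exists_isSnoc hp hg
    obtain ⟨-, -, hadj', -⟩ := H g hg p' p' ⟨h₁, h₂⟩ ⟨h₁, h₂⟩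
    exact (h₂.tail (hJ.ne_nil p hp)).eq_of_comparable hadj'
      (h₁.2 ▸ hfμ.trans (List.prefix_append _ _))

theorem IsSplitting.cgAdj_snoc_right_of_nonneg (hsplit : IsSplitting G J p J') (hq : q ∈ J)
    (hqp : q.1 ≠ p.1) (hadj : CGAdj q p) (hnn : 0 ≤ cgDeg q p) {f : G.E}
    (hf : G.src f = FPath.range p.1) {p' : FPath G × FPath G}
    (h : IsSnoc p.1 f p'.1 ∧ IsSnoc p.2 f p'.2) :
    q ∈ J' ∧ p' ∈ J' ∧ CGAdj q p' ∧ cgDeg q p' = cgDeg q p + 1 := by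
  have hle : q.2.tail.edges.length ≤ p.1.edges.length := by
    unfold cgDeg at hnn; omega
  exact ⟨hsplit.mem_of_ne hq (fun h => hqp (congrArg Prod.fst h)),
    hsplit.mem_of_isSnoc hf h.1 h.2, Or.inl ((FPath.Prefix.of_comparable hadj hle).trans_isSnoc h.1),
    cgDeg_eq_add_one_of_isSnoc_fst h.1⟩

theorem IsSplitting.existsUnique_snoc_cgAdj_right_of_neg (hJ : IsUnitaryJ G J)
    (hsplit : IsSplitting G J p J') (hq : q ∈ J) (hqp : q.1 ≠ p.1) (hadj : CGAdj q p)
    (hneg : cgDeg q p < 0) :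
    ∃! f : G.E, G.src f = FPath.range p.1 ∧
      ∃ p' : FPath G × FPath G, (IsSnoc p.1 f p'.1 ∧ IsSnoc p.2 f p'.2) ∧
        q ∈ J' ∧ p' ∈ J' ∧ CGAdj q p' ∧ cgDeg q p' = cgDeg q p + 1 := by
  have hp := hsplit.1
  have hlt : p.1.edges.length < q.2.tail.edges.length := by
    unfold cgDeg at hneg; omega
  have hpre := FPath.Prefix.of_comparable hadj.symm hlt.le
  obtain ⟨f, hf, hfγ⟩ := hpre.exists_next_edge hlt
  refine ⟨f, ⟨hf, ?_⟩, ?_⟩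
  · obtain ⟨p', h₁, h₂⟩ := hJ.exists_isSnoc hp hf
    exact ⟨p', ⟨h₁, h₂⟩, hsplit.mem_of_ne hq (fun h => hqp (congrArg Prod.fst h)),
      hsplit.mem_of_isSnoc hf h₁ h₂, Or.inr (h₁.prefix_of_prefix hpre hfγ),
      cgDeg_eq_add_one_of_isSnoc_fst h₁⟩
  · rintro g ⟨-, p', ⟨h₁, -⟩, -, -, hadj', -⟩
    exact h₁.eq_of_comparable hadj'.symm hfγ

end Splitting

theorem splitting_edges_general (G : FinGraph)
    (J : Set (FPath G × FPath G)) (hJ : IsUnitaryJ G J)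
    (p : FPath G × FPath G) (hout : AllOutPositive G J p)
    (J' : Set (FPath G × FPath G)) (hsplit : IsSplitting G J p J') :
    -- edges between vertices different from `p` are unaffected
    (∀ a ∈ J, ∀ b ∈ J, a ≠ p → b ≠ p → CGAdj a b → a ∈ J' ∧ b ∈ J' ∧ CGAdj a b) ∧
    -- (SE1)
    (∀ q ∈ J, q.1 ≠ p.1 → CGAdj p q →
      ∃! f : G.E, G.src f = FPath.range p.1 ∧
        ∃ p' : FPath G × FPath G, (IsSnoc p.1 f p'.1 ∧ IsSnoc p.2 f p'.2) ∧
          p' ∈ J' ∧ CGAdj p' q ∧ cgDeg p' q = cgDeg p q - 1) ∧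
    -- (SE2)
    (CGAdj p p →
      ∃! f : G.E, G.src f = FPath.range p.1 ∧
        ∀ b : G.E, G.src b = FPath.range p.1 → ∀ p' p'' : FPath G × FPath G,
          (IsSnoc p.1 f p'.1 ∧ IsSnoc p.2 f p'.2) →
          (IsSnoc p.1 b p''.1 ∧ IsSnoc p.2 b p''.2) →
          p' ∈ J' ∧ p'' ∈ J' ∧ CGAdj p' p'' ∧ cgDeg p' p'' = cgDeg p p) ∧
    -- (SE3)
    (∀ q ∈ J, q.1 ≠ p.1 → CGAdj q p → 0 ≤ cgDeg q p →
      ∀ f : G.E, G.src f = FPath.range p.1 → ∀ p' : FPath G × FPath G,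
        (IsSnoc p.1 f p'.1 ∧ IsSnoc p.2 f p'.2) →
        q ∈ J' ∧ p' ∈ J' ∧ CGAdj q p' ∧ cgDeg q p' = cgDeg q p + 1) ∧
    -- (SE4)
    (∀ q ∈ J, q.1 ≠ p.1 → CGAdj q p → cgDeg q p < 0 →
      ∃! f : G.E, G.src f = FPath.range p.1 ∧
        ∃ p' : FPath G × FPath G, (IsSnoc p.1 f p'.1 ∧ IsSnoc p.2 f p'.2) ∧
          q ∈ J' ∧ p' ∈ J' ∧ CGAdj q p' ∧ cgDeg q p' = cgDeg q p + 1) := by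
  refine ⟨fun a ha b hb hap hbp hadj => ⟨hsplit.mem_of_ne ha hap, hsplit.mem_of_ne hb hbp, hadj⟩,
    fun q hq _ hadj => hsplit.existsUnique_snoc_cgAdj_left hJ hout hq hadj,
    hsplit.existsUnique_snoc_cgAdj_self hJ hout,
    fun q hq hqp hadj hnn _ hf _ h => hsplit.cgAdj_snoc_right_of_nonneg hq hqp hadj hnn hf h,
    fun q hq hqp hadj hneg => hsplit.existsUnique_snoc_cgAdj_right_of_neg hJ hq hqp hadj hneg⟩

/-- STATEMENT 9 (SE1)–(SE4): description of the edges of the coding graph `E_{J'}` of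
the splitting `J'` of `J` at a vertex `p = (μ, eν)` all of whose outgoing edges are
positive. -/
theorem splitting_edges (G : FinGraph) (hG : Standing G)
    (J : Set (FPath G × FPath G)) (hJ : IsUnitaryJ G J)
    (p : FPath G × FPath G) (hp : p ∈ J) (hout : AllOutPositive G J p)
    (J' : Set (FPath G × FPath G)) (hsplit : IsSplitting G J p J') :
    -- edges between vertices different from `p` are unaffected
    (∀ a ∈ J, ∀ b ∈ J, a ≠ p → b ≠ p → CGAdj a b → a ∈ J' ∧ b ∈ J' ∧ CGAdj a b) ∧
    -- (SE1)
    (∀ q ∈ J, q.1 ≠ p.1 → CGAdj p q →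
      ∃! f : G.E, G.src f = FPath.range p.1 ∧
        ∃ p' : FPath G × FPath G, (IsSnoc p.1 f p'.1 ∧ IsSnoc p.2 f p'.2) ∧
          p' ∈ J' ∧ CGAdj p' q ∧ cgDeg p' q = cgDeg p q - 1) ∧
    -- (SE2)
    (CGAdj p p →
      ∃! f : G.E, G.src f = FPath.range p.1 ∧
        ∀ b : G.E, G.src b = FPath.range p.1 → ∀ p' p'' : FPath G × FPath G,
          (IsSnoc p.1 f p'.1 ∧ IsSnoc p.2 f p'.2) →
          (IsSnoc p.1 b p''.1 ∧ IsSnoc p.2 b p''.2) →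
          p' ∈ J' ∧ p'' ∈ J' ∧ CGAdj p' p'' ∧ cgDeg p' p'' = cgDeg p p) ∧
    -- (SE3)
    (∀ q ∈ J, q.1 ≠ p.1 → CGAdj q p → 0 ≤ cgDeg q p →
      ∀ f : G.E, G.src f = FPath.range p.1 → ∀ p' : FPath G × FPath G,
        (IsSnoc p.1 f p'.1 ∧ IsSnoc p.2 f p'.2) →
        q ∈ J' ∧ p' ∈ J' ∧ CGAdj q p' ∧ cgDeg q p' = cgDeg q p + 1) ∧
    -- (SE4)
    (∀ q ∈ J, q.1 ≠ p.1 → CGAdj q p → cgDeg q p < 0 →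
      ∃! f : G.E, G.src f = FPath.range p.1 ∧
        ∃ p' : FPath G × FPath G, (IsSnoc p.1 f p'.1 ∧ IsSnoc p.2 f p'.2) ∧
          q ∈ J' ∧ p' ∈ J' ∧ CGAdj q p' ∧ cgDeg q p' = cgDeg q p + 1) :=
  splitting_edges_general G J hJ p hout J' hsplit
end

section
/- Let J be as given, and suppose that every edge of the coding graph E_J is non-negative and that E_J contains no non-positive cycles. Let ω and ξ be finite paths in E_J with E(ω) = E(ξ), and write r(ω) = (μ_1, eν_1) and r(ξ) = (μ_2, eν_2) (the distinguished first edges of the range vertices coincide because the E-labels agree). Then the tails ν_1 and ν_2 are prefix-comparable (ν_1 ≼ ν_2 or ν_2 ≼ ν_1; equivalently, L_r(ω)^* L_r(ξ) ≠ 0 in the Leavitt path algebra) if and only if ω = ξ. -/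
variable {G : FinGraph}

/-!
Read `ω` and `ξ` backwards from their ranges. Two vertices of `E_J` with the same first edge
`e` and comparable tails have comparable second coordinates `eν`, hence intersecting cylinder
sets (cylinders are nonempty because `E` has no sinks), so they coincide because the sets
`Z(ν)` are pairwise disjoint. As all edges are non-negative, an edge from `p` to `(μ, eν)`
forces the tail of `p` to be a prefix of `μ`; so the predecessors of a common vertex again have
comparable tails, and the argument moves one step back along the common `E`-label.
-/

namespace FPath

def Comparable (p q : FPath G) : Prop :=
  p.Prefix q ∨ q.Prefix p

lemma comparable_of_prefix_of_prefix {p q r : FPath G} (hp : p.Prefix r) (hq : q.Prefix r) :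
    p.Comparable q := by
  rcases List.prefix_or_prefix_of_prefix hp.2 hq.2 with h | h
  · exact .inl ⟨hp.1.trans hq.1.symm, h⟩
  · exact .inr ⟨hq.1.trans hp.1.symm, h⟩

lemma Prefix.of_tail {p q : FPath G} {e : G.E} (hp : p.edges.head? = some e)
    (hq : q.edges.head? = some e) (h : p.tail.Prefix q.tail) : p.Prefix q := by
  refine ⟨(p.head_src e hp).symm.trans (q.head_src e hq), ?_⟩
  obtain ⟨s, hs⟩ := List.head?_eq_some_iff.mp hp
  obtain ⟨t, ht⟩ := List.head?_eq_some_iff.mp hq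
  have hst : s <+: t := by simpa [FPath.tail, hs, ht] using h.2
  rw [hs, ht]
  exact List.cons_prefix_cons.mpr ⟨rfl, hst⟩

lemma Comparable.of_tail {p q : FPath G} {e : G.E} (hp : p.edges.head? = some e)
    (hq : q.edges.head? = some e) (h : p.tail.Comparable q.tail) : p.Comparable q :=
  h.imp (Prefix.of_tail hp hq) (Prefix.of_tail hq hp)

lemma Prefix.cylinder_subset_s14 {p q : FPath G} (h : p.Prefix q) : cylinder q ⊆ cylinder p := by
  rintro r ⟨hs, hi⟩
  refine ⟨hs.trans h.1.symm, fun i hip => ?_⟩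
  rw [hi i (hip.trans_le h.2.length_le)]
  exact (h.2.getElem hip).symm

noncomputable def extendEdges (hs : ∀ v : G.V, ∃ e, G.src e = v) (p : FPath G) : ℕ → G.E
  | 0 => p.edges.getD 0 (hs p.source).choose
  | n + 1 => p.edges.getD (n + 1) (hs (G.rng (p.extendEdges hs n))).choose

section Extend

variable (hs : ∀ v : G.V, ∃ e, G.src e = v) (p : FPath G)

lemma extendEdges_of_lt {i : ℕ} (h : i < p.edges.length) : p.extendEdges hs i = p.edges[i] := by
  cases i <;> exact List.getD_eq_getElem _ _ h

lemma extendEdges_chain (i : ℕ) :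
    G.rng (p.extendEdges hs i) = G.src (p.extendEdges hs (i + 1)) := by
  by_cases h : i + 1 < p.edges.length
  · rw [extendEdges_of_lt hs p (Nat.lt_of_succ_lt h), extendEdges_of_lt hs p h]
    exact List.isChain_iff_getElem.mp p.chain i h
  · rw [extendEdges, List.getD_eq_default _ _ (Nat.le_of_not_lt h)]
    exact ((hs _).choose_spec).symm

noncomputable def extend : IPath G :=
  ⟨p.extendEdges hs, extendEdges_chain hs p⟩

lemma extend_mem_cylinder : p.extend hs ∈ cylinder p := by
  refine ⟨?_, fun i h => extendEdges_of_lt hs p h⟩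
  change G.src (p.extendEdges hs 0) = p.source
  cases hp : p.edges with
  | nil => simpa [extendEdges, hp] using (hs p.source).choose_spec
  | cons a l =>
    rw [extendEdges_of_lt hs p (by simp [hp])]
    exact p.head_src _ (by simp [hp])

end Extend

lemma Comparable.cylinder_inter_nonempty (hs : ∀ v : G.V, ∃ e, G.src e = v) {p q : FPath G}
    (h : p.Comparable q) : (cylinder p ∩ cylinder q).Nonempty := by
  rcases h with h | h
  · exact ⟨q.extend hs, h.cylinder_subset_s14 (q.extend_mem_cylinder hs), q.extend_mem_cylinder hs⟩
  · exact ⟨p.extend hs, p.extend_mem_cylinder hs, h.cylinder_subset_s14 (p.extend_mem_cylinder hs)⟩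

end FPath

def listELabel (l : List (FPath G × FPath G)) : List G.E :=
  l.filterMap fun v => v.2.edges.head?

lemma listELabel_cons {v : FPath G × FPath G} {e : G.E} (he : v.2.edges.head? = some e)
    (l : List (FPath G × FPath G)) : listELabel (v :: l) = e :: listELabel l :=
  List.filterMap_cons_some (f := fun w : FPath G × FPath G => w.2.edges.head?) he

lemma listELabel_reverse (l : List (FPath G × FPath G)) :
    listELabel l.reverse = (listELabel l).reverse :=
  List.filterMap_reverse

lemma CGPath.ext_of_verts {J : Set (FPath G × FPath G)} {ω ξ : CGPath G J}
    (h : ω.verts = ξ.verts) : ω = ξ := by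
  cases ω; cases ξ; simp_all

namespace IsUnitaryJ

variable {J : Set (FPath G × FPath G)} (hJ : IsUnitaryJ G J)
include hJ

lemma exists_head?_eq_some {p : FPath G × FPath G} (hp : p ∈ J) :
    ∃ e, p.2.edges.head? = some e :=
  Option.ne_none_iff_exists'.mp (mt List.head?_eq_none_iff.mp (hJ.ne_nil p hp))

lemma listELabel_ne_nil {l : List (FPath G × FPath G)} (hl : ∀ v ∈ l, v ∈ J) (hne : l ≠ []) :
    listELabel l ≠ [] := by
  obtain ⟨v, t, rfl⟩ := List.exists_cons_of_ne_nil hne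
  obtain ⟨e, he⟩ := hJ.exists_head?_eq_some (hl v List.mem_cons_self)
  rw [listELabel_cons he]
  exact List.cons_ne_nil _ _

lemma eq_of_comparable_snd (hs : ∀ v : G.V, ∃ e, G.src e = v) {p q : FPath G × FPath G}
    (hp : p ∈ J) (hq : q ∈ J) (h : p.2.Comparable q.2) : p = q := by
  by_contra hne
  exact (h.cylinder_inter_nonempty hs).ne_empty (hJ.disj₂ p hp q hq hne)

lemma eq_and_listELabel_eq_of_cons (hs : ∀ v : G.V, ∃ e, G.src e = v)
    {p q : FPath G × FPath G} {l₁ l₂ : List (FPath G × FPath G)} (hp : p ∈ J) (hq : q ∈ J)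
    (hlab : listELabel (p :: l₁) = listELabel (q :: l₂)) (h : p.2.tail.Comparable q.2.tail) :
    p = q ∧ listELabel l₁ = listELabel l₂ := by
  obtain ⟨e, he⟩ := hJ.exists_head?_eq_some hp
  obtain ⟨f, hf⟩ := hJ.exists_head?_eq_some hq
  rw [listELabel_cons he, listELabel_cons hf, List.cons.injEq] at hlab
  obtain ⟨rfl, hlab⟩ := hlab
  exact ⟨hJ.eq_of_comparable_snd hs hp hq (h.of_tail he hf), hlab⟩

end IsUnitaryJ

lemma AllEdgesNonneg.tail_prefix_of_adj {J : Set (FPath G × FPath G)} (hnn : AllEdgesNonneg G J)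
    {p q : FPath G × FPath G} (hp : p ∈ J) (hq : q ∈ J) (h : CGAdj p q) : p.2.tail.Prefix q.1 := by
  refine h.elim id fun hqp => ?_
  have hlen : p.2.tail.edges.length ≤ q.1.edges.length := by
    have := hnn p hp q hq h
    unfold cgDeg at this
    omega
  exact ⟨hqp.1.symm, hqp.2.eq_of_length_le hlen ▸ List.prefix_refl _⟩

lemma AllEdgesNonneg.tail_comparable_of_adj_of_adj {J : Set (FPath G × FPath G)}
    (hnn : AllEdgesNonneg G J) {p q r : FPath G × FPath G} (hp : p ∈ J) (hq : q ∈ J)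
    (hr : r ∈ J) (hpr : CGAdj p r) (hqr : CGAdj q r) : p.2.tail.Comparable q.2.tail :=
  FPath.comparable_of_prefix_of_prefix (hnn.tail_prefix_of_adj hp hr hpr)
    (hnn.tail_prefix_of_adj hq hr hqr)

/-- `l₁` and `l₂` are coding-graph paths read backwards, from their ranges. -/
lemma eq_of_listELabel_eq_of_comparable_head (hs : ∀ v : G.V, ∃ e, G.src e = v)
    {J : Set (FPath G × FPath G)} (hJ : IsUnitaryJ G J) (hnn : AllEdgesNonneg G J)
    {l₁ l₂ : List (FPath G × FPath G)} (hne₁ : l₁ ≠ []) (hne₂ : l₂ ≠ [])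
    (hJ₁ : ∀ v ∈ l₁, v ∈ J) (hJ₂ : ∀ v ∈ l₂, v ∈ J)
    (hc₁ : l₁.IsChain (flip CGAdj)) (hc₂ : l₂.IsChain (flip CGAdj))
    (hlab : listELabel l₁ = listELabel l₂)
    (h : (l₁.head hne₁).2.tail.Comparable (l₂.head hne₂).2.tail) : l₁ = l₂ := by
  induction l₁ generalizing l₂ with
  | nil => exact absurd rfl hne₁
  | cons p t₁ ih =>
    obtain ⟨q, t₂, rfl⟩ := List.exists_cons_of_ne_nil hne₂
    obtain ⟨rfl, htail⟩ :=
      hJ.eq_and_listELabel_eq_of_cons hs (hJ₁ p (by simp)) (hJ₂ q (by simp)) hlab h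
    congr 1
    rcases t₁ with _ | ⟨p₁, r₁⟩ <;> rcases t₂ with _ | ⟨p₂, r₂⟩
    · rfl
    · exact absurd htail.symm (hJ.listELabel_ne_nil (l := _ :: _)
        (fun v hv => hJ₂ v (List.mem_cons_of_mem _ hv)) (List.cons_ne_nil _ _))
    · exact absurd htail (hJ.listELabel_ne_nil (l := _ :: _)
        (fun v hv => hJ₁ v (List.mem_cons_of_mem _ hv)) (List.cons_ne_nil _ _))
    · obtain ⟨hadj₁, hc₁⟩ := List.isChain_cons_cons.mp hc₁
      obtain ⟨hadj₂, hc₂⟩ := List.isChain_cons_cons.mp hc₂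
      exact ih (by simp) (by simp) (fun v hv => hJ₁ v (by simp [hv]))
        (fun v hv => hJ₂ v (by simp [hv])) hc₁ hc₂ htail
        (hnn.tail_comparable_of_adj_of_adj (hJ₁ p₁ (by simp)) (hJ₂ p₂ (by simp))
          (hJ₁ p (by simp)) hadj₁ hadj₂)

theorem range_labels_comparable_iff_general (G : FinGraph) (hG : Standing G)
    (J : Set (FPath G × FPath G)) (hJ : IsUnitaryJ G J)
    (hnn : AllEdgesNonneg G J)
    (ω ξ : CGPath G J) (he : ω.elabel = ξ.elabel) :
    (FPath.Prefix (ω.verts.getLast ω.ne).2.tail (ξ.verts.getLast ξ.ne).2.tail ∨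
      FPath.Prefix (ξ.verts.getLast ξ.ne).2.tail (ω.verts.getLast ω.ne).2.tail) ↔
    ω = ξ := by
  refine ⟨fun h => CGPath.ext_of_verts ?_, fun h => h ▸ .inl ⟨rfl, List.prefix_refl _⟩⟩
  rw [← List.reverse_inj]
  refine eq_of_listELabel_eq_of_comparable_head hG.no_sinks hJ hnn
    (List.reverse_ne_nil_iff.mpr ω.ne) (List.reverse_ne_nil_iff.mpr ξ.ne)
    (fun v hv => ω.mem v (List.mem_reverse.mp hv)) (fun v hv => ξ.mem v (List.mem_reverse.mp hv))
    (List.isChain_reverse.mpr ω.adj) (List.isChain_reverse.mpr ξ.adj) ?_ ?_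
  · rw [listELabel_reverse, listELabel_reverse]
    exact congrArg List.reverse he
  · rw [List.head_reverse, List.head_reverse]
    exact h

/-- Lemma 5.6: if all edges of `E_J` are non-negative and `E_J` has no
non-positive cycles, then for paths `ω, ξ` in `E_J` with the same `E`-label, the tails
of (the second coordinates of) their range vertices are prefix-comparable (the
combinatorial content of `L_r(ω)^* L_r(ξ) ≠ 0`) if and only if `ω = ξ`. -/
theorem range_labels_comparable_iff (G : FinGraph) (hG : Standing G)
    (J : Set (FPath G × FPath G)) (hJ : IsUnitaryJ G J)
    (hnn : AllEdgesNonneg G J) (hnc : ¬ HasNonposCycle G J)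
    (ω ξ : CGPath G J) (he : ω.elabel = ξ.elabel) :
    (FPath.Prefix (ω.verts.getLast ω.ne).2.tail (ξ.verts.getLast ξ.ne).2.tail ∨
      FPath.Prefix (ξ.verts.getLast ξ.ne).2.tail (ω.verts.getLast ω.ne).2.tail) ↔
    ω = ξ :=
  range_labels_comparable_iff_general G hG J hJ hnn ω ξ he
end
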